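/- Let r ≥ 1, let A₀ ∈ ℝ^{r×r} be the nilpotent upper-shift matrix with (A₀)_{a,a+1} = 1 and all other entries zero, and let ξ(s) := (s^{r−1}/(r−1)!, …, s, 1)ᵀ ∈ ℝ^r. Let t > 0, x₀ ∈ ℝ^r, and let α, β : [0,t] → ℝ be continuous with α(s) ≤ β(s) for all s. Define the single-input reach set X_t := { exp(tA₀)x₀ + ∫₀ᵗ ξ(s) u(s) ds : u : [0,t] → ℝ Lebesgue-measurable with α(s) ≤ u(s) ≤ β(s) for all s }. Then for every y ∈ ℝ^r, h_{X_t}(y) = ⟨y, exp(tA₀)x₀⟩ + ∫₀ᵗ [ ν(s) ⟨y, ξ(s)⟩ + μ(s) |⟨y, ξ(s)⟩| ] ds, where μ(s) := (β(s) − α(s))/2 and ν(s) := (β(s) + α(s))/2. -/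

import Mathlib

noncomputable section
open Matrix MeasureTheory TopologicalSpace Filter
open scoped ENNReal Pointwise

/-- The `r × r` nilpotent upper-shift matrix `N` with `N_{a,a+1} = 1`. -/
def shiftMat (r : ℕ) : Matrix (Fin r) (Fin r) ℝ :=
  fun a b => if (b : ℕ) = (a : ℕ) + 1 then 1 else 0

/-- `ξ(s) = (s^{r-1}/(r-1)!, …, s, 1)ᵀ ∈ ℝ^r`. -/
def xi (r : ℕ) (s : ℝ) : Fin r → ℝ :=
  fun a => s ^ (r - 1 - (a : ℕ)) / (Nat.factorial (r - 1 - (a : ℕ)))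

/-- Support function `h_K(y) = sup_{x ∈ K} ⟨y, x⟩` of a set `K`. -/
def sptFn {ι : Type*} [Fintype ι] (K : Set (ι → ℝ)) (y : ι → ℝ) : ℝ :=
  sSup ((fun x => y ⬝ᵥ x) '' K)

/-- The Euclidean (2-)norm on `ι → ℝ`. -/
def euclNorm {ι : Type*} [Fintype ι] (y : ι → ℝ) : ℝ :=
  Real.sqrt (∑ i, y i ^ 2)

/-- The `p`-norm on `ℝ^m`, `p ∈ [1,∞]`. -/
def pnorm (p : ℝ≥0∞) [Fact (1 ≤ p)] {m : ℕ} (u : Fin m → ℝ) : ℝ :=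
  ‖(WithLp.equiv p (Fin m → ℝ)).symm u‖

/-- The (forward) reach set at time `t` of `ẋ = Ax + Bu`, from initial condition
`x₀`, over measurable inputs selected from the set-valued uncertainty `U`. -/
def reachSet {N M : Type*} [Fintype N] [DecidableEq N] [Fintype M]
    (A : Matrix N N ℝ) (B : Matrix N M ℝ) (x0 : N → ℝ) (t : ℝ)
    (U : ℝ → Set (M → ℝ)) : Set (N → ℝ) :=
  {x | ∃ u : ℝ → M → ℝ, Measurable u ∧ (∀ s ∈ Set.Icc 0 t, u s ∈ U s) ∧
    x = NormedSpace.exp (t • A) *ᵥ x0 +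
      ∫ s in (0:ℝ)..t, NormedSpace.exp (s • A) *ᵥ (B *ᵥ u s)}

/-- Block-diagonal integrator state matrix `A = blockdiag(A_1,…,A_m)`. -/
def blkA {m : ℕ} (r : Fin m → ℕ) : Matrix (Σ j, Fin (r j)) (Σ j, Fin (r j)) ℝ :=
  fun p q => if p.1 = q.1 ∧ (q.2 : ℕ) = (p.2 : ℕ) + 1 then 1 else 0

/-- Block-diagonal integrator input matrix `B = blockdiag(b_1,…,b_m)`, `b_j = e_{r_j}`. -/
def blkB {m : ℕ} (r : Fin m → ℕ) : Matrix (Σ j, Fin (r j)) (Fin m) ℝ :=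
  fun p k => if p.1 = k ∧ (p.2 : ℕ) = r p.1 - 1 then 1 else 0

/-- Single-input integrator reach set with scalar input confined to `[α(s), β(s)]`. -/
def reachSet1 {r : ℕ} (x0 : Fin r → ℝ) (t : ℝ) (α β : ℝ → ℝ) : Set (Fin r → ℝ) :=
  {x | ∃ u : ℝ → ℝ, Measurable u ∧ (∀ s ∈ Set.Icc 0 t, u s ∈ Set.Icc (α s) (β s)) ∧
    x = NormedSpace.exp (t • shiftMat r) *ᵥ x0 + ∫ s in (0:ℝ)..t, u s • xi r s}

/-!
Pairing with `y` turns a point of the reach set into `⟨y, e^{tA₀}x₀⟩ + ∫ u c` with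
`c(s) = ⟨y, ξ(s)⟩`. Pointwise, `u c ≤ ν c + μ |c|` whenever `u ∈ [α, β]`, with equality for the
bang-bang input `u = β` where `c ≥ 0` and `u = α` where `c < 0`; this input is admissible, so the
supremum is attained.
-/

open Set intervalIntegral

section IntervalSupport

variable {a b c u : ℝ}

theorem mul_le_add_mul_abs_of_mem_Icc (hu : u ∈ Icc a b) :
    u * c ≤ (b + a) / 2 * c + (b - a) / 2 * |c| := by
  rcases le_or_gt 0 c with hc | hc
  · rw [abs_of_nonneg hc]; nlinarith [hu.2]
  · rw [abs_of_neg hc]; nlinarith [hu.1]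

theorem ite_mul_eq_add_mul_abs (a b c : ℝ) :
    (if 0 ≤ c then b else a) * c = (b + a) / 2 * c + (b - a) / 2 * |c| := by
  split_ifs with hc
  · rw [abs_of_nonneg hc]; ring
  · rw [abs_of_neg (not_le.1 hc)]; ring

end IntervalSupport

theorem dotProduct_intervalIntegral {ι : Type*} [Fintype ι] (y : ι → ℝ) {f : ℝ → ι → ℝ}
    {a b : ℝ} (hf : IntervalIntegrable f volume a b) :
    y ⬝ᵥ ∫ s in a..b, f s = ∫ s in a..b, y ⬝ᵥ f s :=
  (LinearMap.toContinuousLinearMap (dotProductBilin ℝ ℝ y)).intervalIntegral_comp_comm hf |>.symm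

section BoxConstrainedInput

variable {a b : ℝ} {α β c u : ℝ → ℝ}

theorem intervalIntegrable_of_forall_mem_Icc (hab : a ≤ b) (hu : AEStronglyMeasurable u)
    (hα : ContinuousOn α (Icc a b)) (hβ : ContinuousOn β (Icc a b))
    (hmem : ∀ s ∈ Icc a b, u s ∈ Icc (α s) (β s)) : IntervalIntegrable u volume a b :=
  (intervalIntegrable_iff_integrableOn_Icc_of_le hab).2 <|
    integrable_of_le_of_le hu.restrict
      (ae_restrict_of_forall_mem measurableSet_Icc fun s hs => (hmem s hs).1)
      (ae_restrict_of_forall_mem measurableSet_Icc fun s hs => (hmem s hs).2)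
      hα.integrableOn_Icc hβ.integrableOn_Icc

theorem dotProduct_intervalIntegral_smul {ι : Type*} [Fintype ι] (y : ι → ℝ) {ξ : ℝ → ι → ℝ}
    (hab : a ≤ b) (hu : IntervalIntegrable u volume a b) (hξ : ContinuousOn ξ (Icc a b)) :
    y ⬝ᵥ ∫ s in a..b, u s • ξ s = ∫ s in a..b, u s * (y ⬝ᵥ ξ s) := by
  have hint : IntervalIntegrable (fun s => u s • ξ s) volume a b := by
    rw [intervalIntegrable_iff_integrableOn_Icc_of_le hab] at hu ⊢
    exact hu.smul_continuousOn hξ isCompact_Icc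
  simp_rw [dotProduct_intervalIntegral y hint, dotProduct_smul, smul_eq_mul]

theorem intervalIntegral_mul_le_of_forall_mem_Icc (hab : a ≤ b)
    (hα : ContinuousOn α (Icc a b)) (hβ : ContinuousOn β (Icc a b))
    (hc : ContinuousOn c (Icc a b)) (hu : AEStronglyMeasurable u)
    (hmem : ∀ s ∈ Icc a b, u s ∈ Icc (α s) (β s)) :
    ∫ s in a..b, u s * c s ≤ ∫ s in a..b, ((β s + α s) / 2 * c s + (β s - α s) / 2 * |c s|) := by
  refine integral_mono_on hab ?_ ?_ fun s hs => mul_le_add_mul_abs_of_mem_Icc (hmem s hs)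
  · have hu := intervalIntegrable_of_forall_mem_Icc hab hu hα hβ hmem
    rw [intervalIntegrable_iff_integrableOn_Icc_of_le hab] at hu ⊢
    exact hu.mul_continuousOn hc isCompact_Icc
  · exact ContinuousOn.intervalIntegrable_of_Icc hab <|
      ((hβ.add hα).div_const 2).mul hc |>.add (((hβ.sub hα).div_const 2).mul hc.abs)

open Classical in
theorem exists_measurable_forall_mem_Icc_mul_eq (hα : ContinuousOn α (Icc a b))
    (hβ : ContinuousOn β (Icc a b)) (hαβ : ∀ s ∈ Icc a b, α s ≤ β s) (hc : Measurable c) :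
    ∃ u : ℝ → ℝ, Measurable u ∧ (∀ s ∈ Icc a b, u s ∈ Icc (α s) (β s)) ∧
      ∀ s ∈ Icc a b, u s * c s = (β s + α s) / 2 * c s + (β s - α s) / 2 * |c s| := by
  set α' := (Icc a b).piecewise α 0
  set β' := (Icc a b).piecewise β 0
  refine ⟨fun s => if 0 ≤ c s then β' s else α' s, ?_, fun s hs => ?_, fun s hs => ?_⟩
  · exact Measurable.ite (measurableSet_le measurable_const hc)
      (hβ.measurable_piecewise continuousOn_const measurableSet_Icc)
      (hα.measurable_piecewise continuousOn_const measurableSet_Icc)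
  · simp only [α', β', piecewise_eq_of_mem _ _ _ hs]
    split_ifs
    · exact ⟨hαβ s hs, le_rfl⟩
    · exact ⟨le_rfl, hαβ s hs⟩
  · simp only [α', β', piecewise_eq_of_mem _ _ _ hs]
    exact ite_mul_eq_add_mul_abs _ _ _

end BoxConstrainedInput

theorem sptFn_reachSet1_box_general (r : ℕ) (t : ℝ) (ht : 0 < t)
    (x0 : Fin r → ℝ) (α β : ℝ → ℝ)
    (hα : ContinuousOn α (Set.Icc 0 t)) (hβ : ContinuousOn β (Set.Icc 0 t))
    (hαβ : ∀ s ∈ Set.Icc (0:ℝ) t, α s ≤ β s) (y : Fin r → ℝ) :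
    sptFn (reachSet1 x0 t α β) y =
      y ⬝ᵥ (NormedSpace.exp (t • shiftMat r) *ᵥ x0) +
        ∫ s in (0:ℝ)..t,
          ((β s + α s) / 2 * (y ⬝ᵥ xi r s) + (β s - α s) / 2 * |y ⬝ᵥ xi r s|) := by
  have hξ : Continuous (xi r) := continuous_pi fun a => (continuous_pow _).div_const _
  have hc : Continuous fun s => y ⬝ᵥ xi r s := continuous_const.dotProduct hξ
  have hdot : ∀ u, Measurable u → (∀ s ∈ Icc 0 t, u s ∈ Icc (α s) (β s)) →
      y ⬝ᵥ (NormedSpace.exp (t • shiftMat r) *ᵥ x0 + ∫ s in (0:ℝ)..t, u s • xi r s) =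
        y ⬝ᵥ (NormedSpace.exp (t • shiftMat r) *ᵥ x0) + ∫ s in (0:ℝ)..t, u s * (y ⬝ᵥ xi r s) :=
    fun u hu hmem => by
      rw [dotProduct_add, dotProduct_intervalIntegral_smul y ht.le
        (intervalIntegrable_of_forall_mem_Icc ht.le hu.aestronglyMeasurable hα hβ hmem)
        hξ.continuousOn]
  refine IsGreatest.csSup_eq ⟨?_, ?_⟩
  · obtain ⟨u, hu, hmem, hopt⟩ :=
      exists_measurable_forall_mem_Icc_mul_eq hα hβ hαβ hc.measurable
    refine ⟨_, ⟨u, hu, hmem, rfl⟩, (hdot u hu hmem).trans ?_⟩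
    rw [integral_congr fun s hs => hopt s (by rwa [uIcc_of_le ht.le] at hs)]
  · rintro _ ⟨x, ⟨u, hu, hmem, rfl⟩, rfl⟩
    exact (hdot u hu hmem).trans_le <| add_le_add le_rfl <|
      intervalIntegral_mul_le_of_forall_mem_Icc ht.le hα hβ hc.continuousOn
        hu.aestronglyMeasurable hmem

/-- support function of the single-input integrator reach set with scalar
input confined to `[α(s), β(s)]`. -/
theorem sptFn_reachSet1_box (r : ℕ) (hr : 1 ≤ r) (t : ℝ) (ht : 0 < t)
    (x0 : Fin r → ℝ) (α β : ℝ → ℝ)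
    (hα : ContinuousOn α (Set.Icc 0 t)) (hβ : ContinuousOn β (Set.Icc 0 t))
    (hαβ : ∀ s ∈ Set.Icc (0:ℝ) t, α s ≤ β s) (y : Fin r → ℝ) :
    sptFn (reachSet1 x0 t α β) y =
      y ⬝ᵥ (NormedSpace.exp (t • shiftMat r) *ᵥ x0) +
        ∫ s in (0:ℝ)..t,
          ((β s + α s) / 2 * (y ⬝ᵥ xi r s) + (β s - α s) / 2 * |y ⬝ᵥ xi r s|) :=
  sptFn_reachSet1_box_general r t ht x0 α β hα hβ hαβ y
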